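/- In the setting Z^k = X^k + N^k (N^k i.i.d. full-support noise independent of X^k, mod-Q addition), any minimizer (Z^k, X̂^k) of I(Z^k; X̂^k) subject to (1/k)Σ_i E[ρ_N(Z_i − X̂_i)] ≤ H(N) must satisfy: the differences Z_i − X̂_i are each distributed as N, are mutually independent, and are independent of X̂^k. -/

import Mathlib

open Finset Real MeasureTheory ProbabilityTheory

def IsPMF {A : Type*} [Fintype A] (p : A → ℝ) : Prop :=
  (∀ a, 0 ≤ p a) ∧ ∑ a, p a = 1

noncomputable def entH {A : Type*} [Fintype A] (p : A → ℝ) : ℝ :=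
  ∑ a, Real.negMulLog (p a)

noncomputable def rho {A : Type*} [Fintype A] (ν : A → ℝ) (a : A) : ℝ :=
  - Real.log (ν a)

/-- The PMF of a finite-alphabet random variable `V` on `(Ω, μ)`. -/
noncomputable def pmfOf {Ω A : Type*} [Fintype A] [MeasurableSpace Ω]
    (μ : Measure Ω) (V : Ω → A) : A → ℝ :=
  fun a => (μ (V ⁻¹' {a})).toReal

/-- Shannon entropy of a finite-alphabet random variable. -/
noncomputable def Hm {Ω A : Type*} [Fintype A] [MeasurableSpace Ω]
    (μ : Measure Ω) (V : Ω → A) : ℝ :=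
  entH (pmfOf μ V)

/-- Mutual information I(V;W) = H(V) + H(W) - H(V,W). -/
noncomputable def MI {Ω A B : Type*} [Fintype A] [Fintype B] [MeasurableSpace Ω]
    (μ : Measure Ω) (V : Ω → A) (W : Ω → B) : ℝ :=
  Hm μ V + Hm μ W - Hm μ (fun ω => (V ω, W ω))

noncomputable def marg1 {α β : Type*} [Fintype α] [Fintype β] (q : α × β → ℝ) : α → ℝ :=
  fun a => ∑ b, q (a, b)

noncomputable def marg2 {α β : Type*} [Fintype α] [Fintype β] (q : α × β → ℝ) : β → ℝ :=
  fun b => ∑ a, q (a, b)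

/-- Mutual information of a joint PMF. -/
noncomputable def MIp {α β : Type*} [Fintype α] [Fintype β] (q : α × β → ℝ) : ℝ :=
  entH (marg1 q) + entH (marg2 q) - entH q

section PmfCalc
open scoped Classical
variable {Ω A B : Type*} [MeasurableSpace Ω] {μ : Measure Ω} [IsProbabilityMeasure μ]
  [Fintype A] [MeasurableSpace A] [MeasurableSingletonClass A]
  [Fintype B] [MeasurableSpace B] [MeasurableSingletonClass B]
  {V : Ω → A} {W : Ω → B}

omit [IsProbabilityMeasure μ] [MeasurableSpace A] [MeasurableSingletonClass A] in
lemma pmfOf_nonneg (a : A) : 0 ≤ pmfOf μ V a := ENNReal.toReal_nonneg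

lemma measure_preimage_finset (hV : Measurable V) (T : Finset A) :
    (μ (V ⁻¹' ↑T)).toReal = ∑ a ∈ T, pmfOf μ V a := by
  unfold pmfOf
  rw [← ENNReal.toReal_sum (fun a _ => measure_ne_top μ _)]
  congr 1
  rw [sum_measure_preimage_singleton T (fun b _ => hV (measurableSet_singleton b))]

lemma sum_pmfOf (hV : Measurable V) : ∑ a, pmfOf μ V a = 1 := by
  have := measure_preimage_finset (μ := μ) hV Finset.univ
  simpa [measure_univ] using this.symm

lemma pmfOf_comp (hV : Measurable V) (f : A → B) (b : B) :
    pmfOf μ (fun ω => f (V ω)) b = ∑ a ∈ univ.filter (fun a => f a = b), pmfOf μ V a := by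
  rw [← measure_preimage_finset hV]
  have hset : V ⁻¹' ↑(univ.filter (fun a => f a = b)) = (fun ω => f (V ω)) ⁻¹' {b} := by
    ext ω; simp [Set.mem_preimage]
  rw [hset]; rfl

lemma sum_pmfOf_comp_mul (hV : Measurable V) (f : A → B) (g : B → ℝ) :
    ∑ b, pmfOf μ (fun ω => f (V ω)) b * g b = ∑ a, pmfOf μ V a * g (f a) := by
  simp_rw [pmfOf_comp hV f, Finset.sum_mul]
  rw [← Finset.sum_fiberwise univ f (fun a => pmfOf μ V a * g (f a))]
  refine Finset.sum_congr rfl fun b _ => Finset.sum_congr rfl fun a ha => ?_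
  simp only [mem_filter] at ha
  rw [ha.2]

omit [IsProbabilityMeasure μ] [MeasurableSpace A] [MeasurableSingletonClass A]
  [MeasurableSpace B] [MeasurableSingletonClass B] in
lemma pmfOf_comp_equiv (e : A ≃ B) (a : A) :
    pmfOf μ (fun ω => e (V ω)) (e a) = pmfOf μ V a := by
  unfold pmfOf
  have : (fun ω => e (V ω)) ⁻¹' {e a} = V ⁻¹' {a} := by ext ω; simp
  rw [this]

omit [IsProbabilityMeasure μ] [MeasurableSpace A] [MeasurableSingletonClass A]
  [MeasurableSpace B] [MeasurableSingletonClass B] in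
lemma Hm_comp_equiv (e : A ≃ B) : Hm μ (fun ω => e (V ω)) = Hm μ V := by
  unfold Hm entH
  rw [← Equiv.sum_comp e (fun b => Real.negMulLog (pmfOf μ (fun ω => e (V ω)) b))]
  exact Finset.sum_congr rfl fun a _ => by rw [pmfOf_comp_equiv]

omit [IsProbabilityMeasure μ] in
lemma pmfOf_pair_indep (h : IndepFun V W μ) :
    pmfOf μ (fun ω => (V ω, W ω)) = fun x => pmfOf μ V x.1 * pmfOf μ W x.2 := by
  funext x
  unfold pmfOf
  rw [← ENNReal.toReal_mul]
  have hs : (fun ω => (V ω, W ω)) ⁻¹' {x} = V ⁻¹' {x.1} ∩ W ⁻¹' {x.2} := by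
    ext ω; simp [Prod.ext_iff]
  rw [hs,
    h.measure_inter_preimage_eq_mul _ _ (measurableSet_singleton _) (measurableSet_singleton _)]

lemma marg1_eq (hV : Measurable V) (hW : Measurable W) (a : A) :
    ∑ b, pmfOf μ (fun ω => (V ω, W ω)) (a, b) = pmfOf μ V a := by
  have h1 : ∑ b, pmfOf μ (fun ω => (V ω, W ω)) (a, b)
      = ∑ x ∈ ({a} : Finset A) ×ˢ (univ : Finset B), pmfOf μ (fun ω => (V ω, W ω)) x := by
    rw [Finset.sum_product, Finset.sum_singleton]
  rw [h1, ← measure_preimage_finset (hV.prodMk hW)]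
  have hs : (fun ω => (V ω, W ω)) ⁻¹' ↑(({a} : Finset A) ×ˢ (univ : Finset B)) = V ⁻¹' {a} := by
    ext ω; simp [eq_comm]
  rw [hs]; rfl

lemma marg2_eq (hV : Measurable V) (hW : Measurable W) (b : B) :
    ∑ a, pmfOf μ (fun ω => (V ω, W ω)) (a, b) = pmfOf μ W b := by
  have h1 : ∑ a, pmfOf μ (fun ω => (V ω, W ω)) (a, b)
      = ∑ x ∈ (univ : Finset A) ×ˢ ({b} : Finset B), pmfOf μ (fun ω => (V ω, W ω)) x := by
    rw [Finset.sum_product_right, Finset.sum_singleton]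
  rw [h1, ← measure_preimage_finset (hV.prodMk hW)]
  have hs : (fun ω => (V ω, W ω)) ⁻¹' ↑((univ : Finset A) ×ˢ ({b} : Finset B)) = W ⁻¹' {b} := by
    ext ω; simp [eq_comm]
  rw [hs]; rfl

end PmfCalc

section Gibbs
variable {A B C : Type*} [Fintype A] [Fintype B] [Fintype C]

lemma negMulLog_le_bound {p w : ℝ} (hp : 0 ≤ p) (hw : 0 ≤ w) (hsupp : 0 < p → 0 < w) :
    Real.negMulLog p ≤ p * (-Real.log w) + (w - p) := by
  rcases eq_or_lt_of_le hp with h | h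
  · simp [← h, Real.negMulLog, hw]
  · have hw' := hsupp h
    have hlog := Real.log_le_sub_one_of_pos (div_pos hw' h)
    rw [Real.log_div (ne_of_gt hw') (ne_of_gt h)] at hlog
    have h2 := mul_le_mul_of_nonneg_left hlog (le_of_lt h)
    have hp' : p * (w / p - 1) = w - p := by field_simp
    rw [Real.negMulLog]
    nlinarith
lemma negMulLog_eq_bound {p w : ℝ} (hp : 0 ≤ p) (hw : 0 ≤ w) (hsupp : 0 < p → 0 < w)
    (heq : Real.negMulLog p = p * (-Real.log w) + (w - p)) : w = p := by
  rcases eq_or_lt_of_le hp with h | h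
  · rw [← h] at heq ⊢; simpa [Real.negMulLog] using heq.symm
  · have hw' := hsupp h
    by_contra hne
    have hne' : w / p ≠ 1 := by
      intro hc; exact hne (by field_simp at hc; linarith)
    have hlog := Real.log_lt_sub_one_of_pos (div_pos hw' h) hne'
    rw [Real.log_div (ne_of_gt hw') (ne_of_gt h)] at hlog
    have h2 := mul_lt_mul_of_pos_left hlog h
    have hp' : p * (w / p - 1) = w - p := by field_simp
    rw [Real.negMulLog] at heq
    nlinarith

lemma gibbs_le (p w : A → ℝ) (hp0 : ∀ a, 0 ≤ p a) (hw0 : ∀ a, 0 ≤ w a)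
    (hp1 : ∑ a, p a = 1) (hw1 : ∑ a, w a = 1) (hsupp : ∀ a, 0 < p a → 0 < w a) :
    entH p ≤ ∑ a, p a * (-Real.log (w a)) := by
  have h := Finset.sum_le_sum
    (fun a (_ : a ∈ univ) => negMulLog_le_bound (hp0 a) (hw0 a) (hsupp a))
  unfold entH
  calc ∑ a, Real.negMulLog (p a) ≤ ∑ a, (p a * (-Real.log (w a)) + (w a - p a)) := h
    _ = ∑ a, p a * (-Real.log (w a)) + ((∑ a, w a) - (∑ a, p a)) := by
        rw [Finset.sum_add_distrib, Finset.sum_sub_distrib]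
    _ = ∑ a, p a * (-Real.log (w a)) := by rw [hp1, hw1]; ring

lemma gibbs_eq (p w : A → ℝ) (hp0 : ∀ a, 0 ≤ p a) (hw0 : ∀ a, 0 ≤ w a)
    (hp1 : ∑ a, p a = 1) (hw1 : ∑ a, w a = 1) (hsupp : ∀ a, 0 < p a → 0 < w a)
    (heq : entH p = ∑ a, p a * (-Real.log (w a))) : w = p := by
  have hsum : ∑ a, Real.negMulLog (p a) = ∑ a, (p a * (-Real.log (w a)) + (w a - p a)) := by
    rw [Finset.sum_add_distrib, Finset.sum_sub_distrib, hp1, hw1, ← heq]; unfold entH; ring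
  have hkey := (Finset.sum_eq_sum_iff_of_le
    (fun a (_ : a ∈ univ) => negMulLog_le_bound (hp0 a) (hw0 a) (hsupp a))).mp hsum
  funext a
  exact negMulLog_eq_bound (hp0 a) (hw0 a) (hsupp a) (hkey a (mem_univ a))

end Gibbs

section EntProd
variable {A B C : Type*} [Fintype A] [Fintype B] [Fintype C]

lemma entH_comp_equiv (e : A ≃ B) (p : B → ℝ) : entH (fun a => p (e a)) = entH p := by
  unfold entH
  exact Equiv.sum_comp e (fun b => Real.negMulLog (p b))

lemma entH_prod (p : A → ℝ) (q : B → ℝ) (hp : ∑ a, p a = 1) (hq : ∑ b, q b = 1) :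
    entH (fun x : A × B => p x.1 * q x.2) = entH p + entH q := by
  unfold entH
  rw [Fintype.sum_prod_type]
  have : ∀ a b, Real.negMulLog (p a * q b)
      = q b * Real.negMulLog (p a) + p a * Real.negMulLog (q b) :=
    fun a b => Real.negMulLog_mul _ _
  simp_rw [this, Finset.sum_add_distrib, ← Finset.mul_sum, ← Finset.sum_mul, hq]
  rw [hp]
  simp

lemma sum_pi_prod {k : ℕ} (p : Fin k → C → ℝ) (hp : ∀ i, ∑ c, p i c = 1) :
    ∑ v : Fin k → C, ∏ i, p i (v i) = 1 := by
  rw [← Fintype.prod_sum]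
  simp [hp]

lemma entH_pi {k : ℕ} (p : Fin k → C → ℝ) (hp : ∀ i, ∑ c, p i c = 1) :
    entH (fun v : Fin k → C => ∏ i, p i (v i)) = ∑ i, entH (p i) := by
  induction k with
  | zero => simp [entH]
  | succ n ih =>
    rw [← entH_comp_equiv (Fin.consEquiv (fun _ => C)) (fun v : Fin (n+1) → C => ∏ i, p i (v i))]
    have hterm : (fun x : C × (Fin n → C) => ∏ i, p i ((Fin.consEquiv (fun _ => C)) x i))
        = fun x : C × (Fin n → C) => p 0 x.1 * ∏ i : Fin n, p i.succ (x.2 i) := by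
      funext x
      rw [Fin.prod_univ_succ]
      simp [Fin.consEquiv]
    calc entH (fun x : C × (Fin n → C) => ∏ i, p i ((Fin.consEquiv (fun _ => C)) x i))
        = entH (fun x : C × (Fin n → C) => p 0 x.1 * ∏ i : Fin n, p i.succ (x.2 i)) := by
          rw [hterm]
      _ = entH (p 0) + entH (fun v : Fin n → C => ∏ i : Fin n, p (Fin.succ i) (v i)) := by
          rw [entH_prod (p 0) (fun v : Fin n → C => ∏ i : Fin n, p i.succ (v i)) (hp 0)
            (sum_pi_prod (fun i => p i.succ) (fun i => hp i.succ))]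
      _ = ∑ i : Fin (n+1), entH (p i) := by
          rw [ih (fun i => p i.succ) (fun i => hp i.succ), Fin.sum_univ_succ]

end EntProd

section Subadd
open scoped Classical
variable {A B C : Type*} [Fintype A] [Fintype B] [Fintype C]

lemma crossent_split_pair (q : A × B → ℝ) (m1 : A → ℝ) (m2 : B → ℝ)
    (hq0 : ∀ x, 0 ≤ q x)
    (hm1 : ∀ a, m1 a = ∑ b, q (a, b)) (hm2 : ∀ b, m2 b = ∑ a, q (a, b))
    (hs1 : ∀ x, 0 < q x → 0 < m1 x.1) (hs2 : ∀ x, 0 < q x → 0 < m2 x.2) :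
    ∑ x, q x * (-Real.log (m1 x.1 * m2 x.2)) = entH m1 + entH m2 := by
  have hsplit : ∀ x : A × B, q x * (-Real.log (m1 x.1 * m2 x.2))
      = q x * (-Real.log (m1 x.1)) + q x * (-Real.log (m2 x.2)) := by
    intro x
    rcases eq_or_lt_of_le (hq0 x) with h | h
    · rw [← h]; ring
    · rw [Real.log_mul (ne_of_gt (hs1 x h)) (ne_of_gt (hs2 x h))]; ring
  simp_rw [hsplit, Finset.sum_add_distrib]
  congr 1
  · rw [Fintype.sum_prod_type]
    unfold entH
    refine Finset.sum_congr rfl fun a _ => ?_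
    have : ∑ b, q (a, b) * (-Real.log (m1 a)) = m1 a * (-Real.log (m1 a)) := by
      rw [← Finset.sum_mul, ← hm1]
    rw [this, Real.negMulLog]; ring
  · rw [Fintype.sum_prod_type_right]
    unfold entH
    refine Finset.sum_congr rfl fun b _ => ?_
    have : ∑ a, q (a, b) * (-Real.log (m2 b)) = m2 b * (-Real.log (m2 b)) := by
      rw [← Finset.sum_mul, ← hm2]
    rw [this, Real.negMulLog]; ring

lemma entH_pair_subadd (q : A × B → ℝ) (m1 : A → ℝ) (m2 : B → ℝ)
    (hq0 : ∀ x, 0 ≤ q x) (hq1 : ∑ x, q x = 1)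
    (hm1 : ∀ a, m1 a = ∑ b, q (a, b)) (hm2 : ∀ b, m2 b = ∑ a, q (a, b)) :
    entH q ≤ entH m1 + entH m2 ∧
      (entH q = entH m1 + entH m2 → ∀ x, q x = m1 x.1 * m2 x.2) := by
  have hm10 : ∀ a, 0 ≤ m1 a := fun a => (hm1 a) ▸ Finset.sum_nonneg fun b _ => hq0 _
  have hm20 : ∀ b, 0 ≤ m2 b := fun b => (hm2 b) ▸ Finset.sum_nonneg fun a _ => hq0 _
  have hm11 : ∑ a, m1 a = 1 := by simp_rw [hm1]; rw [← Fintype.sum_prod_type]; exact hq1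
  have hm21 : ∑ b, m2 b = 1 := by simp_rw [hm2]; rw [← Fintype.sum_prod_type_right]; exact hq1
  have hs1 : ∀ x : A × B, 0 < q x → 0 < m1 x.1 := by
    intro x hx
    rw [hm1]
    calc (0:ℝ) < q (x.1, x.2) := hx
      _ ≤ ∑ b, q (x.1, b) := Finset.single_le_sum (f := fun b => q (x.1, b)) (fun b _ => hq0 _) (mem_univ x.2)
  have hs2 : ∀ x : A × B, 0 < q x → 0 < m2 x.2 := by
    intro x hx
    rw [hm2]
    calc (0:ℝ) < q (x.1, x.2) := hx
      _ ≤ ∑ a, q (a, x.2) := Finset.single_le_sum (f := fun a => q (a, x.2)) (fun a _ => hq0 _) (mem_univ x.1)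
  set w : A × B → ℝ := fun x => m1 x.1 * m2 x.2 with hw
  have hw0 : ∀ x, 0 ≤ w x := fun x => mul_nonneg (hm10 _) (hm20 _)
  have hw1 : ∑ x, w x = 1 := by
    rw [hw]
    rw [Fintype.sum_prod_type]
    simp_rw [← Finset.mul_sum, hm21, mul_one]
    exact hm11
  have hwsupp : ∀ x, 0 < q x → 0 < w x := fun x hx => mul_pos (hs1 x hx) (hs2 x hx)
  have hcross := crossent_split_pair q m1 m2 hq0 hm1 hm2 hs1 hs2
  constructor
  · calc entH q ≤ ∑ x, q x * (-Real.log (w x)) := gibbs_le q w hq0 hw0 hq1 hw1 hwsupp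
      _ = entH m1 + entH m2 := hcross
  · intro heq
    have := gibbs_eq q w hq0 hw0 hq1 hw1 hwsupp (by rw [heq, ← hcross])
    intro x
    rw [← this]

lemma crossent_split_pi {k : ℕ} (q : (Fin k → C) → ℝ) (m : Fin k → C → ℝ)
    (hq0 : ∀ v, 0 ≤ q v)
    (hm : ∀ i c, m i c = ∑ v ∈ univ.filter (fun v => v i = c), q v)
    (hs : ∀ (v) (i : Fin k), 0 < q v → 0 < m i (v i)) :
    ∑ v, q v * (-Real.log (∏ i, m i (v i))) = ∑ i, entH (m i) := by
  classical
  have hsplit : ∀ v, q v * (-Real.log (∏ i, m i (v i)))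
      = ∑ i, q v * (-Real.log (m i (v i))) := by
    intro v
    rcases eq_or_lt_of_le (hq0 v) with h | h
    · rw [← h]; simp
    · rw [Real.log_prod (fun i _ => ne_of_gt (hs v i h))]
      rw [← Finset.sum_neg_distrib, Finset.mul_sum]
  simp_rw [hsplit]
  rw [Finset.sum_comm]
  refine Finset.sum_congr rfl fun i _ => ?_
  -- ∑ v, q v * (-log (m i (v i))) = entH (m i)
  rw [← Finset.sum_fiberwise univ (fun v => v i) (fun v => q v * (-Real.log (m i (v i))))]
  unfold entH
  refine Finset.sum_congr rfl fun c _ => ?_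
  have : ∀ v ∈ univ.filter (fun v : Fin k → C => v i = c),
      q v * (-Real.log (m i (v i))) = q v * (-Real.log (m i c)) := by
    intro v hv
    simp only [mem_filter] at hv
    rw [hv.2]
  rw [Finset.sum_congr rfl this, ← Finset.sum_mul, ← hm, Real.negMulLog]
  ring

lemma entH_pi_subadd {k : ℕ} (q : (Fin k → C) → ℝ) (m : Fin k → C → ℝ)
    (hq0 : ∀ v, 0 ≤ q v) (hq1 : ∑ v, q v = 1)
    (hm : ∀ i c, m i c = ∑ v ∈ univ.filter (fun v => v i = c), q v) :
    entH q ≤ ∑ i, entH (m i) ∧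
      (entH q = ∑ i, entH (m i) → ∀ v, q v = ∏ i, m i (v i)) := by
  classical
  have hm0 : ∀ i c, 0 ≤ m i c := fun i c => (hm i c) ▸ Finset.sum_nonneg fun v _ => hq0 _
  have hm1 : ∀ i, ∑ c, m i c = 1 := by
    intro i
    simp_rw [hm]
    rw [Finset.sum_fiberwise univ (fun v => v i) q]
    exact hq1
  have hs : ∀ (v) (i : Fin k), 0 < q v → 0 < m i (v i) := by
    intro v i hv
    rw [hm]
    calc (0:ℝ) < q v := hv
      _ ≤ ∑ u ∈ univ.filter (fun u => u i = v i), q u :=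
        Finset.single_le_sum (f := q) (fun u _ => hq0 _) (Finset.mem_filter.mpr ⟨mem_univ v, rfl⟩)
  set w : (Fin k → C) → ℝ := fun v => ∏ i, m i (v i) with hwdef
  have hw0 : ∀ v, 0 ≤ w v := fun v => Finset.prod_nonneg fun i _ => hm0 _ _
  have hw1 : ∑ v, w v = 1 := by
    rw [hwdef, ← Fintype.prod_sum]
    simp [hm1]
  have hwsupp : ∀ v, 0 < q v → 0 < w v := fun v hv => Finset.prod_pos fun i _ => hs v i hv
  have hcross := crossent_split_pi q m hq0 hm hs
  constructor
  · calc entH q ≤ ∑ v, q v * (-Real.log (w v)) := gibbs_le q w hq0 hw0 hq1 hw1 hwsupp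
      _ = ∑ i, entH (m i) := hcross
  · intro heq v
    have := gibbs_eq q w hq0 hw0 hq1 hw1 hwsupp (by rw [heq, ← hcross])
    rw [← this]

end Subadd

section Conv
open scoped Classical
variable {Ω : Type*} [MeasurableSpace Ω] {μ : Measure Ω} [IsProbabilityMeasure μ]
  {A B C : Type*} [Fintype A] [MeasurableSpace A] [MeasurableSingletonClass A]
  [Fintype B] [MeasurableSpace B] [MeasurableSingletonClass B]
  [Fintype C] [MeasurableSpace C] [MeasurableSingletonClass C]

lemma indepFun_of_pmf_prod {V : Ω → A} {W : Ω → B} (hV : Measurable V) (hW : Measurable W)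
    (hfact : ∀ x : A × B, pmfOf μ (fun ω => (V ω, W ω)) x = pmfOf μ V x.1 * pmfOf μ W x.2) :
    IndepFun V W μ := by
  rw [indepFun_iff_measure_inter_preimage_eq_mul]
  intro s t _ _
  have key : (μ (V ⁻¹' s ∩ W ⁻¹' t)).toReal = (μ (V ⁻¹' s)).toReal * (μ (W ⁻¹' t)).toReal := by
    have hs1 : V ⁻¹' s = V ⁻¹' ↑(univ.filter (· ∈ s)) := by ext ω; simp
    have hs2 : W ⁻¹' t = W ⁻¹' ↑(univ.filter (· ∈ t)) := by ext ω; simp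
    have hs3 : V ⁻¹' s ∩ W ⁻¹' t
        = (fun ω => (V ω, W ω)) ⁻¹' ↑((univ.filter (· ∈ s)) ×ˢ (univ.filter (· ∈ t))) := by
      ext ω; simp
    rw [hs3, hs1, hs2, measure_preimage_finset (hV.prodMk hW),
      measure_preimage_finset hV, measure_preimage_finset hW, Finset.sum_product]
    simp_rw [hfact]
    rw [← Finset.sum_mul_sum]
  have h1 : μ (V ⁻¹' s ∩ W ⁻¹' t) ≠ ⊤ := measure_ne_top μ _
  have h2 : μ (V ⁻¹' s) * μ (W ⁻¹' t) ≠ ⊤ :=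
    ENNReal.mul_ne_top (measure_ne_top μ _) (measure_ne_top μ _)
  rw [← ENNReal.toReal_eq_toReal_iff' h1 h2] 
  rw [key, ENNReal.toReal_mul]

lemma iIndepFun_of_pmf_prod {k : ℕ} {D : Ω → Fin k → C} (hD : Measurable D)
    (hfact : ∀ v, pmfOf μ D v = ∏ i, pmfOf μ (fun ω => D ω i) (v i)) :
    iIndepFun (fun i ω => D ω i) μ := by
  have hDi : ∀ i, Measurable (fun ω => D ω i) := fun i => (measurable_pi_apply i).comp hD
  rw [iIndepFun_iff_measure_inter_preimage_eq_mul]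
  intro S sets hsets
  set t : Fin k → Finset C := fun i => if i ∈ S then univ.filter (· ∈ sets i) else univ with ht
  have hset : (⋂ i ∈ S, (fun ω => D ω i) ⁻¹' sets i) = D ⁻¹' ↑(Fintype.piFinset t) := by
    ext ω
    simp only [Set.mem_iInter, Set.mem_preimage, Finset.mem_coe, Fintype.mem_piFinset, ht]
    constructor
    · intro h i
      by_cases hi : i ∈ S
      · simp only [hi, if_true, mem_filter, mem_univ, true_and]; exact h i hi
      · simp [hi]
    · intro h i hi
      have := h i
      simp only [hi, if_true, mem_filter, mem_univ, true_and] at this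
      exact this
  have key : (μ (⋂ i ∈ S, (fun ω => D ω i) ⁻¹' sets i)).toReal
      = ∏ i ∈ S, (μ ((fun ω => D ω i) ⁻¹' sets i)).toReal := by
    rw [hset, measure_preimage_finset hD]
    have h1 : ∑ v ∈ Fintype.piFinset t, pmfOf μ D v
        = ∑ v ∈ Fintype.piFinset t, ∏ i, pmfOf μ (fun ω => D ω i) (v i) :=
      Finset.sum_congr rfl fun v _ => hfact v
    rw [h1, ← Finset.prod_univ_sum]
    have h2 : ∀ i, ∑ a ∈ t i, pmfOf μ (fun ω => D ω i) a
        = if i ∈ S then (μ ((fun ω => D ω i) ⁻¹' sets i)).toReal else 1 := by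
      intro i
      by_cases hi : i ∈ S
      · simp only [ht, hi, if_true]
        rw [← measure_preimage_finset (hDi i)]
        congr 2
        ext c; simp
      · simp only [ht, hi, if_false]
        exact sum_pmfOf (hDi i)
    have h3 : ∏ i : Fin k, ∑ a ∈ t i, pmfOf μ (fun ω => D ω i) a
        = ∏ i : Fin k, if i ∈ S then (μ ((fun ω => D ω i) ⁻¹' sets i)).toReal else 1 :=
      Finset.prod_congr rfl fun i _ => h2 i
    rw [h3, Finset.prod_ite_mem univ S (fun i => (μ ((fun ω => D ω i) ⁻¹' sets i)).toReal),
      Finset.univ_inter]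
  have h1 : μ (⋂ i ∈ S, (fun ω => D ω i) ⁻¹' sets i) ≠ ⊤ := measure_ne_top μ _
  have h2 : ∏ i ∈ S, μ ((fun ω => D ω i) ⁻¹' sets i) ≠ ⊤ :=
    ENNReal.prod_ne_top fun i _ => measure_ne_top μ _
  rw [← ENNReal.toReal_eq_toReal_iff' h1 h2, key, ENNReal.toReal_prod]

lemma pmfOf_pi_iid {k : ℕ} {Nv : Ω → Fin k → C}
    (hNiid : iIndepFun (fun i ω => Nv ω i) μ) (v : Fin k → C) :
    pmfOf μ Nv v = ∏ i, pmfOf μ (fun ω => Nv ω i) (v i) := by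
  have key := hNiid.measure_inter_preimage_eq_mul (S := univ) (sets := fun i => {v i})
    (fun i _ => measurableSet_singleton _)
  have hset : (⋂ i ∈ (univ : Finset (Fin k)), (fun ω => Nv ω i) ⁻¹' {v i}) = Nv ⁻¹' {v} := by
    ext ω
    simp [funext_iff]
  rw [hset] at key
  unfold pmfOf
  rw [key, ENNReal.toReal_prod]

end Conv


lemma crossent_self {A : Type*} [Fintype A] (ν : A → ℝ) : ∑ a, ν a * rho ν a = entH ν := by
  unfold entH rho Real.negMulLog
  exact Finset.sum_congr rfl fun a _ => by ring

/-- Structure of minimizers of the rate-distortion problem for Z^k = X^k + N^k at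
distortion level H(N): the differences Zᵢ - X̂ᵢ are each distributed as N, are
mutually independent, and the difference vector is independent of X̂^k. -/
theorem rateDistortion_minimizer_structure
    {Ω : Type*} [MeasurableSpace Ω] (μ : Measure Ω) [IsProbabilityMeasure μ]
    (Q k : ℕ) [NeZero Q] (hk : 0 < k)
    (ν : ZMod Q → ℝ) (hν : IsPMF ν) (hpos : ∀ a, 0 < ν a)
    (X Nv Xh : Ω → Fin k → ZMod Q)
    (hXmeas : Measurable X) (hNmeas : Measurable Nv) (hXhmeas : Measurable Xh)
    (hNpmf : ∀ i, pmfOf μ (fun ω => Nv ω i) = ν)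
    (hNiid : iIndepFun (fun i ω => Nv ω i) μ)
    (hindep : IndepFun X Nv μ)
    (Z : Ω → Fin k → ZMod Q) (hZ : Z = fun ω i => X ω i + Nv ω i)
    -- the joint distribution (Z^k, X̂^k) is feasible:
    (hdist : (1 / (k : ℝ)) * ∑ i : Fin k,
        ∑ a : ZMod Q, pmfOf μ (fun ω => Z ω i - Xh ω i) a * rho ν a ≤ entH ν)
    -- and it minimizes I(Z^k; X̂^k) among all feasible joint distributions with the
    -- correct Z-marginal:
    (hmin : ∀ q : (Fin k → ZMod Q) × (Fin k → ZMod Q) → ℝ,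
        IsPMF q → marg1 q = pmfOf μ Z →
        (1 / (k : ℝ)) * ∑ p : (Fin k → ZMod Q) × (Fin k → ZMod Q),
            q p * ∑ i : Fin k, rho ν (p.1 i - p.2 i) ≤ entH ν →
        MI μ Z Xh ≤ MIp q) :
    (∀ i : Fin k, pmfOf μ (fun ω => Z ω i - Xh ω i) = ν) ∧
    iIndepFun (fun (i : Fin k) ω => Z ω i - Xh ω i) μ ∧
    IndepFun (fun ω (i : Fin k) => Z ω i - Xh ω i) Xh μ := by
  classical
  have hk' : (0:ℝ) < k := Nat.cast_pos.mpr hk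
  have hZmeas : Measurable Z := by
    rw [hZ]
    exact measurable_pi_lambda _ fun i =>
      ((measurable_pi_apply i).comp hXmeas).add ((measurable_pi_apply i).comp hNmeas)
  have hZXN : ∀ ω (i : Fin k), Z ω i - X ω i = Nv ω i := by
    intro ω i; rw [hZ]; exact add_sub_cancel_left _ _
  have hDmeas : Measurable (fun ω (i : Fin k) => Z ω i - Xh ω i) :=
    measurable_pi_lambda _ fun i =>
      ((measurable_pi_apply i).comp hZmeas).sub ((measurable_pi_apply i).comp hXhmeas)
  have hDimeas : ∀ i : Fin k, Measurable (fun ω => Z ω i - Xh ω i) := fun i =>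
    ((measurable_pi_apply i).comp hZmeas).sub ((measurable_pi_apply i).comp hXhmeas)
  -- Step A : upper bound via the joint distribution of (Z, X)
  have hHmNv : Hm μ Nv = (k:ℝ) * entH ν := by
    have hfact : pmfOf μ Nv = fun v => ∏ i, pmfOf μ (fun ω => Nv ω i) (v i) :=
      funext fun v => pmfOf_pi_iid hNiid v
    unfold Hm
    rw [hfact, entH_pi _ (fun i => by rw [hNpmf i]; exact hν.2)]
    simp only [hNpmf]
    rw [Finset.sum_const, Finset.card_univ, Fintype.card_fin, nsmul_eq_mul]
  have hHmpairXN : Hm μ (fun ω => (X ω, Nv ω)) = Hm μ X + (k:ℝ) * entH ν := by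
    unfold Hm
    rw [pmfOf_pair_indep hindep, entH_prod _ _ (sum_pmfOf hXmeas) (sum_pmfOf hNmeas)]
    have h2 : entH (pmfOf μ Nv) = (k:ℝ) * entH ν := hHmNv
    rw [h2]
  have hpairequiv : Hm μ (fun ω => (Z ω, X ω)) = Hm μ X + (k:ℝ) * entH ν := by
    let e : ((Fin k → ZMod Q) × (Fin k → ZMod Q)) ≃ ((Fin k → ZMod Q) × (Fin k → ZMod Q)) :=
      { toFun := fun p => (p.2, p.1 - p.2)
        invFun := fun p => (p.1 + p.2, p.1)
        left_inv := fun p => by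
          refine Prod.ext ?_ rfl
          show p.2 + (p.1 - p.2) = p.1
          abel
        right_inv := fun p => by
          refine Prod.ext rfl ?_
          show p.1 + p.2 - p.1 = p.2
          abel }
    have h1 : (fun ω => e ((Z ω, X ω))) = fun ω => (X ω, Nv ω) := by
      funext ω
      show (X ω, Z ω - X ω) = (X ω, Nv ω)
      refine Prod.ext rfl ?_
      funext i
      exact hZXN ω i
    rw [← Hm_comp_equiv (μ := μ) (V := fun ω => (Z ω, X ω)) e, h1, hHmpairXN]
  have hub : MI μ Z Xh ≤ Hm μ Z - (k:ℝ) * entH ν := by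
    have hpm : Measurable fun ω => (Z ω, X ω) := hZmeas.prodMk hXmeas
    have hq : IsPMF (pmfOf μ fun ω => (Z ω, X ω)) := ⟨fun x => pmfOf_nonneg _, sum_pmfOf hpm⟩
    have hm1 : marg1 (pmfOf μ fun ω => (Z ω, X ω)) = pmfOf μ Z :=
      funext fun a => marg1_eq hZmeas hXmeas a
    have hterm : ∀ i : Fin k, ∑ p : (Fin k → ZMod Q) × (Fin k → ZMod Q),
        (pmfOf μ fun ω => (Z ω, X ω)) p * rho ν (p.1 i - p.2 i) = entH ν := by
      intro i
      have hstep : ∑ b, pmfOf μ (fun ω => Nv ω i) b * rho ν b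
          = ∑ p : (Fin k → ZMod Q) × (Fin k → ZMod Q),
            (pmfOf μ fun ω => (Z ω, X ω)) p * rho ν (p.1 i - p.2 i) := by
        calc ∑ b, pmfOf μ (fun ω => Nv ω i) b * rho ν b
            = ∑ b, pmfOf μ (fun ω => Z ω i - X ω i) b * rho ν b := by
              rw [show (fun ω => Z ω i - X ω i) = fun ω => Nv ω i from
                funext fun ω => hZXN ω i]
          _ = ∑ p : (Fin k → ZMod Q) × (Fin k → ZMod Q),
              (pmfOf μ fun ω => (Z ω, X ω)) p * rho ν (p.1 i - p.2 i) :=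
              sum_pmfOf_comp_mul hpm (fun p => p.1 i - p.2 i) (rho ν)
      rw [← hstep, hNpmf i]
      exact crossent_self ν
    have hdistA : (1 / (k : ℝ)) * ∑ p : (Fin k → ZMod Q) × (Fin k → ZMod Q),
        (pmfOf μ fun ω => (Z ω, X ω)) p * ∑ i : Fin k, rho ν (p.1 i - p.2 i) ≤ entH ν := by
      have hswap : ∑ p : (Fin k → ZMod Q) × (Fin k → ZMod Q),
          (pmfOf μ fun ω => (Z ω, X ω)) p * ∑ i : Fin k, rho ν (p.1 i - p.2 i)
          = ∑ i : Fin k, ∑ p : (Fin k → ZMod Q) × (Fin k → ZMod Q),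
            (pmfOf μ fun ω => (Z ω, X ω)) p * rho ν (p.1 i - p.2 i) := by
        simp_rw [Finset.mul_sum]; rw [Finset.sum_comm]
      rw [hswap, Finset.sum_congr rfl fun i _ => hterm i, Finset.sum_const, Finset.card_univ,
        Fintype.card_fin, nsmul_eq_mul]
      rw [one_div, inv_mul_cancel_left₀ (ne_of_gt hk')]
    have hle := hmin _ hq hm1 hdistA
    have hMIp : MIp (pmfOf μ fun ω => (Z ω, X ω)) = Hm μ Z - (k:ℝ) * entH ν := by
      unfold MIp
      rw [hm1, show marg2 (pmfOf μ fun ω => (Z ω, X ω)) = pmfOf μ X from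
        funext fun b => marg2_eq hZmeas hXmeas b]
      have h2 : entH (pmfOf μ fun ω => (Z ω, X ω)) = Hm μ (fun ω => (Z ω, X ω)) := rfl
      rw [h2, hpairequiv]
      unfold Hm
      ring
    rw [hMIp] at hle
    exact hle
  -- Step B : lower bound chain
  have hq2meas : Measurable (fun ω => ((fun (i:Fin k) => Z ω i - Xh ω i), Xh ω)) :=
    hDmeas.prodMk hXhmeas
  have hpiSub := entH_pi_subadd (pmfOf μ (fun ω (i:Fin k) => Z ω i - Xh ω i))
      (fun i => pmfOf μ (fun ω => Z ω i - Xh ω i)) (fun v => pmfOf_nonneg _) (sum_pmfOf hDmeas)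
      (fun i c => pmfOf_comp hDmeas (fun v => v i) c)
  have hpairSub := entH_pair_subadd
      (pmfOf μ (fun ω => ((fun (i:Fin k) => Z ω i - Xh ω i), Xh ω)))
      (pmfOf μ (fun ω (i:Fin k) => Z ω i - Xh ω i)) (pmfOf μ Xh)
      (fun x => pmfOf_nonneg _) (sum_pmfOf hq2meas)
      (fun a => (marg1_eq hDmeas hXhmeas a).symm) (fun b => (marg2_eq hDmeas hXhmeas b).symm)
  have hHmZXh : Hm μ (fun ω => (Z ω, Xh ω))
      = entH (pmfOf μ (fun ω => ((fun (i:Fin k) => Z ω i - Xh ω i), Xh ω))) := by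
    let e2 : ((Fin k → ZMod Q) × (Fin k → ZMod Q)) ≃ ((Fin k → ZMod Q) × (Fin k → ZMod Q)) :=
      { toFun := fun p => (p.1 - p.2, p.2)
        invFun := fun p => (p.1 + p.2, p.2)
        left_inv := fun p => by
          refine Prod.ext ?_ rfl
          show p.1 - p.2 + p.2 = p.1
          abel
        right_inv := fun p => by
          refine Prod.ext ?_ rfl
          show p.1 + p.2 - p.2 = p.1
          abel }
    have h1 : (fun ω => e2 ((Z ω, Xh ω)))
        = fun ω => ((fun (i:Fin k) => Z ω i - Xh ω i), Xh ω) := by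
      funext ω
      show (Z ω - Xh ω, Xh ω) = _
      refine Prod.ext ?_ rfl
      funext i
      rfl
    rw [← Hm_comp_equiv (μ := μ) (V := fun ω => (Z ω, Xh ω)) e2, h1]
    rfl
  have hb5 : ∀ i : Fin k, entH (pmfOf μ (fun ω => Z ω i - Xh ω i))
      ≤ ∑ a, pmfOf μ (fun ω => Z ω i - Xh ω i) a * rho ν a := fun i =>
    gibbs_le _ ν (fun a => pmfOf_nonneg _) hν.1 (sum_pmfOf (hDimeas i)) hν.2 (fun a _ => hpos a)
  have c0 : MI μ Z Xh = Hm μ Z + entH (pmfOf μ Xh)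
      - entH (pmfOf μ (fun ω => ((fun (i:Fin k) => Z ω i - Xh ω i), Xh ω))) := by
    unfold MI
    rw [hHmZXh]
    rfl
  have c3 : ∑ i : Fin k, entH (pmfOf μ (fun ω => Z ω i - Xh ω i))
      ≤ ∑ i : Fin k, ∑ a, pmfOf μ (fun ω => Z ω i - Xh ω i) a * rho ν a :=
    Finset.sum_le_sum fun i _ => hb5 i
  have c4 : ∑ i : Fin k, ∑ a, pmfOf μ (fun ω => Z ω i - Xh ω i) a * rho ν a
      ≤ (k:ℝ) * entH ν := by
    have h3 := mul_le_mul_of_nonneg_left hdist (le_of_lt hk')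
    rw [one_div, mul_inv_cancel_left₀ (ne_of_gt hk')] at h3
    exact h3
  have e1 : entH (pmfOf μ (fun ω => ((fun (i:Fin k) => Z ω i - Xh ω i), Xh ω)))
      = entH (pmfOf μ (fun ω (i:Fin k) => Z ω i - Xh ω i)) + entH (pmfOf μ Xh) := by
    linarith [hpairSub.1, hpiSub.1, c3, c4, hub, c0.ge, c0.le]
  have e2 : entH (pmfOf μ (fun ω (i:Fin k) => Z ω i - Xh ω i))
      = ∑ i : Fin k, entH (pmfOf μ (fun ω => Z ω i - Xh ω i)) := by
    linarith [hpairSub.1, hpiSub.1, c3, c4, hub, c0.ge, c0.le]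
  have e3 : ∑ i : Fin k, entH (pmfOf μ (fun ω => Z ω i - Xh ω i))
      = ∑ i : Fin k, ∑ a, pmfOf μ (fun ω => Z ω i - Xh ω i) a * rho ν a := by
    linarith [hpairSub.1, hpiSub.1, c3, c4, hub, c0.ge, c0.le]
  have e4 := (Finset.sum_eq_sum_iff_of_le fun i _ => hb5 i).mp e3
  refine ⟨?_, ?_, ?_⟩
  · intro i
    exact (gibbs_eq _ ν (fun a => pmfOf_nonneg _) hν.1 (sum_pmfOf (hDimeas i)) hν.2
      (fun a _ => hpos a) (e4 i (Finset.mem_univ i))).symm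
  · exact iIndepFun_of_pmf_prod hDmeas (hpiSub.2 e2)
  · exact indepFun_of_pmf_prod hDmeas hXhmeas (hpairSub.2 e1)
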